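/- arXiv:2410.00678 — 5 statements merged into one kernel-verified Lean document; each statement's English description precedes it below -/
import Mathlib

section
/- Assume the map ℰ* : Q → Q is injective. Let f^k ∈ W (the previous time step) and suppose f* ∈ W and ρ* ∈ Q satisfy the limiting HOLO equations: (i) b(f*, z) + Δt·𝒜(f*, z) + Δt·ν·b(f*, z) = b(f^k, z) + Δt·ν·b(M ρ*, z) − Δt·β(z) for all z ∈ Z, and (ii) ⟪ρ*, q⟫ + Δt·ℰ(ρ*, q) = ⟪ρ f^k, q⟫ − Δt·(𝒜(f*, ι q) − ℰ(ρ f*, q)) − Δt·β(ι q) for all q ∈ Q. Then ρ f* = ρ*. (Paper's Proposition 3.1: the limit of the HOLO iteration has low-order moments consistent with the kinetic moments.) -/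
open RealInnerProductSpace

/-- **Proposition 3.1** (HOLO moment consistency). In the abstract algebraic setting for the
fully discrete HOLO method, if the map `ℰ*` is injective and `(f*, ρ*)` satisfies the limiting
HOLO equations, then the kinetic moments agree with the low-order moments: `ρ f* = ρ*`. -/
theorem holo_moment_convergence
    {W Z Q : Type*} [AddCommGroup W] [Module ℝ W] [AddCommGroup Z] [Module ℝ Z]
    [NormedAddCommGroup Q] [InnerProductSpace ℝ Q] [FiniteDimensional ℝ Q]
    (b 𝒜 : W →ₗ[ℝ] Z →ₗ[ℝ] ℝ) (ρ : W →ₗ[ℝ] Q) (ι : Q →ₗ[ℝ] Z) (β : Z →ₗ[ℝ] ℝ)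
    (M : Q → W)
    (hcompat : ∀ (w : W) (q : Q), b w (ι q) = ⟪ρ w, q⟫)
    (hM : ∀ η : Q, ρ (M η) = η)
    (ν Δt : ℝ) (hν : 0 < ν) (hΔt : 0 < Δt)
    (E : Q → Q → ℝ) (hE : ∀ η q, E η q = 𝒜 (M η) (ι q))
    (Estar : Q → Q)
    (hEstar : ∀ η q, ⟪Estar η, q⟫ = (1 + Δt * ν) * ⟪η, q⟫ + Δt * E η q)
    (hinj : Function.Injective Estar)
    (fk fstar : W) (ρstar : Q)
    (hi : ∀ z : Z, b fstar z + Δt * 𝒜 fstar z + Δt * ν * b fstar z =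
        b fk z + Δt * ν * b (M ρstar) z - Δt * β z)
    (hii : ∀ q : Q, ⟪ρstar, q⟫ + Δt * E ρstar q =
        ⟪ρ fk, q⟫ - Δt * (𝒜 fstar (ι q) - E (ρ fstar) q) - Δt * β (ι q)) :
    ρ fstar = ρstar := by
  apply hinj
  apply ext_inner_right ℝ
  intro q
  rw [hEstar, hEstar]
  have h1 := hi (ι q)
  have h2 := hii q
  rw [hcompat, hcompat, hcompat, hM] at h1
  linear_combination h1 - h2
end

section
/- Let ρ^k ∈ Q and g^k ∈ W with ρ g^k = 0. Suppose ρ̂ ∈ Q and ĝ ∈ W satisfy the backward-Euler micro–macro system: (a) ⟪ρ̂, q⟫ + Δt·ℰ(ρ̂, q) = ⟪ρ^k, q⟫ − Δt·𝒜(ĝ, ι q) − Δt·β(ι q) for all q ∈ Q, and (b) b(ĝ, z) + Δt·𝒜(ĝ, z) + Δt·ν·b(ĝ, z) = b(g^k, z) + b(M ρ^k, z) − b(M ρ̂, z) − Δt·𝒜(M ρ̂, z) − Δt·β(z) for all z ∈ Z. Then ρ ĝ = 0. (Paper's Proposition 3.3: the backward-Euler micro–macro scheme preserves the zero-moment condition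 on the micro distribution.) -/
open RealInnerProductSpace

/-- **Proposition 3.3** (conservation of the zero-moment condition). In the abstract algebraic
setting for the fully discrete micro–macro method, if `ρ g^k = 0` and `(ρ̂, ĝ)` solves the
backward-Euler micro–macro system, then `ρ ĝ = 0`. -/
theorem micro_macro_zero_moment
    {W Z Q : Type*} [AddCommGroup W] [Module ℝ W] [AddCommGroup Z] [Module ℝ Z]
    [NormedAddCommGroup Q] [InnerProductSpace ℝ Q] [FiniteDimensional ℝ Q]
    (b 𝒜 : W →ₗ[ℝ] Z →ₗ[ℝ] ℝ) (ρ : W →ₗ[ℝ] Q) (ι : Q →ₗ[ℝ] Z) (β : Z →ₗ[ℝ] ℝ)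
    (M : Q → W)
    (hcompat : ∀ (w : W) (q : Q), b w (ι q) = ⟪ρ w, q⟫)
    (hM : ∀ η : Q, ρ (M η) = η)
    (ν Δt : ℝ) (hν : 0 < ν) (hΔt : 0 < Δt)
    (E : Q → Q → ℝ) (hE : ∀ η q, E η q = 𝒜 (M η) (ι q))
    (ρk : Q) (gk : W) (hgk : ρ gk = 0)
    (ρhat : Q) (ghat : W)
    (ha : ∀ q : Q, ⟪ρhat, q⟫ + Δt * E ρhat q =
        ⟪ρk, q⟫ - Δt * 𝒜 ghat (ι q) - Δt * β (ι q))
    (hb : ∀ z : Z, b ghat z + Δt * 𝒜 ghat z + Δt * ν * b ghat z =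
        b gk z + b (M ρk) z - b (M ρhat) z - Δt * 𝒜 (M ρhat) z - Δt * β z) :
    ρ ghat = 0 := by
  have key : ∀ q : Q, ⟪ρ ghat, q⟫ = 0 := by
    intro q
    have ha' := ha q
    have hb' := hb (ι q)
    rw [hcompat, hcompat, hcompat, hcompat, hM, hM, hgk] at hb'
    rw [hE] at ha'
    have h1 : (1 + Δt * ν) * ⟪ρ ghat, q⟫ = 0 := by
      rw [inner_zero_left] at hb'
      nlinarith [hb', ha']
    have hpos : (1 : ℝ) + Δt * ν > 0 := by positivity
    have := mul_eq_zero.mp h1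
    rcases this with h | h
    · exact absurd h (ne_of_gt hpos)
    · exact h
  have := key (ρ ghat)
  exact inner_self_eq_zero.mp this
end

section
/- Assume the map ℰ* : Q → Q is injective. Let ρ^k ∈ Q and g^k ∈ W with ρ g^k = 0. Suppose ρ* ∈ Q and g* ∈ W satisfy the limiting MM-HOLO equations: (a') ⟪ρ*, q⟫ + Δt·ℰ(ρ*, q) = ⟪ρ^k, q⟫ − Δt·(ℰ(ρ*, q) + 𝒜(g*, ι q) − ℰ(ρ* + ρ g*, q)) − Δt·β(ι q) for all q ∈ Q, and (b') b(g*, z) + Δt·𝒜(g*, z) + Δt·ν·b(g*, z) = b(g^k, z) + b(M ρ^k, z) − b(M ρ*, z) − Δt·𝒜(M ρ*, z) − Δt·β(z) for all z ∈ Z. Then ρ g* = 0. (Paper's Proposition 3.4: the limit of the MM-HOLO iteration has a micro distribution with vanishing moments.) -/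
open RealInnerProductSpace

/-- **Proposition 3.4** (MM-HOLO limit has moment-free micro part). In the abstract algebraic
setting for the fully discrete MM-HOLO method, if `ℰ*` is injective, `ρ g^k = 0`, and
`(ρ*, g*)` satisfies the limiting MM-HOLO equations, then `ρ g* = 0`. -/
theorem mm_holo_zero_moment
    {W Z Q : Type*} [AddCommGroup W] [Module ℝ W] [AddCommGroup Z] [Module ℝ Z]
    [NormedAddCommGroup Q] [InnerProductSpace ℝ Q] [FiniteDimensional ℝ Q]
    (b 𝒜 : W →ₗ[ℝ] Z →ₗ[ℝ] ℝ) (ρ : W →ₗ[ℝ] Q) (ι : Q →ₗ[ℝ] Z) (β : Z →ₗ[ℝ] ℝ)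
    (M : Q → W)
    (hcompat : ∀ (w : W) (q : Q), b w (ι q) = ⟪ρ w, q⟫)
    (hM : ∀ η : Q, ρ (M η) = η)
    (ν Δt : ℝ) (hν : 0 < ν) (hΔt : 0 < Δt)
    (E : Q → Q → ℝ) (hE : ∀ η q, E η q = 𝒜 (M η) (ι q))
    (Estar : Q → Q)
    (hEstar : ∀ η q, ⟪Estar η, q⟫ = (1 + Δt * ν) * ⟪η, q⟫ + Δt * E η q)
    (hinj : Function.Injective Estar)
    (ρk : Q) (gk : W) (hgk : ρ gk = 0)
    (ρstar : Q) (gstar : W)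
    (ha : ∀ q : Q, ⟪ρstar, q⟫ + Δt * E ρstar q =
        ⟪ρk, q⟫ - Δt * (E ρstar q + 𝒜 gstar (ι q) - E (ρstar + ρ gstar) q)
          - Δt * β (ι q))
    (hb : ∀ z : Z, b gstar z + Δt * 𝒜 gstar z + Δt * ν * b gstar z =
        b gk z + b (M ρk) z - b (M ρstar) z - Δt * 𝒜 (M ρstar) z - Δt * β z) :
    ρ gstar = 0 := by
  have key : ∀ q : Q, ⟪Estar (ρstar + ρ gstar), q⟫ = ⟪Estar ρstar, q⟫ := by
    intro q
    have ha' := ha q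
    have hb' := hb (ι q)
    rw [hcompat gstar q, hcompat gk q, hcompat (M ρk) q, hcompat (M ρstar) q,
      hM ρk, hM ρstar, hgk, ← hE ρstar q] at hb'
    simp only [inner_zero_left] at hb'
    rw [hEstar, hEstar, inner_add_left]
    ring_nf
    ring_nf at ha' hb'
    linarith
  have heq : Estar (ρstar + ρ gstar) = Estar ρstar := ext_inner_right ℝ key
  have := hinj heq
  have h2 : ρ gstar = ρstar + ρ gstar - ρstar := by abel
  rw [h2, this, sub_self]
end

section
/- Fix ν, Δt > 0 and discrete distributions f^k, f^ℓ, f^{ℓ+1}, f^{k+1} : ℝ → ℝᴺ, each componentwise integrable and with finite ‖·‖_𝓜-norm, such that for almost every v ∈ ℝ: (source iteration) f^{ℓ+1}(v) + Δt·v·A f^{ℓ+1}(v) + ν·Δt·f^{ℓ+1}(v) = f^k(v) + ν·Δt·𝓜(v)·n_{f^ℓ}, and (backward Euler) f^{k+1}(v) + Δt·v·A f^{k+1}(v) + ν·Δt·f^{k+1}(v) = f^k(v) + ν·Δt·𝓜(v)·n_{f^{k+1}}. Set e^ℓ := f^ℓ − f^{k+1} and e^{ℓ+1} := f^{ℓ+1}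 − f^{k+1}. Then (1+ν·Δt)·(‖P_𝓜 e^{ℓ+1}‖²_𝓜 + ‖P⊥ e^{ℓ+1}‖²_𝓜) ≤ ν·Δt·‖P_𝓜 e^ℓ‖_𝓜·‖P_𝓜 e^{ℓ+1}‖_𝓜, and consequently ‖P_𝓜 e^{ℓ+1}‖_𝓜 ≤ (ν·Δt/(1+ν·Δt))·‖P_𝓜 e^ℓ‖_𝓜. (Paper's Proposition 4.1: convergence estimate for source iteration applied to the backward-Euler discretization of the linear BGK model.) -/
open MeasureTheory Real
open scoped RealInnerProductSpace


open MeasureTheory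

/-- The static Maxwellian `𝓜(v) = (2πθ₀)^{-1/2} exp(-(v-u₀)²/(2θ₀))`. -/
noncomputable def staticMaxwellian (u₀ θ₀ v : ℝ) : ℝ :=
  (Real.sqrt (2 * Real.pi * θ₀))⁻¹ * Real.exp (-(v - u₀) ^ 2 / (2 * θ₀))

/-- The density `n_w = ∫ w(v) dv` of a discrete distribution. -/
noncomputable def density {N : ℕ} (w : ℝ → EuclideanSpace ℝ (Fin N)) :
    EuclideanSpace ℝ (Fin N) :=
  ∫ v : ℝ, w v

/-- The `𝓜`-weighted norm `‖w‖_𝓜 = (∫ ‖w(v)‖² 𝓜(v)⁻¹ dv)^{1/2}`. -/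
noncomputable def MNorm (u₀ θ₀ : ℝ) {N : ℕ} (w : ℝ → EuclideanSpace ℝ (Fin N)) : ℝ :=
  Real.sqrt (∫ v : ℝ, ‖w v‖ ^ 2 / staticMaxwellian u₀ θ₀ v)

/-- The macro projection `(P_𝓜 w)(v) = 𝓜(v) n_w`. -/
noncomputable def macroProj (u₀ θ₀ : ℝ) {N : ℕ} (w : ℝ → EuclideanSpace ℝ (Fin N)) :
    ℝ → EuclideanSpace ℝ (Fin N) :=
  fun v => staticMaxwellian u₀ θ₀ v • density w

/-- The micro (complement) projection `P⊥ w = w - P_𝓜 w`. -/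
noncomputable def microProj (u₀ θ₀ : ℝ) {N : ℕ} (w : ℝ → EuclideanSpace ℝ (Fin N)) :
    ℝ → EuclideanSpace ℝ (Fin N) :=
  fun v => w v - macroProj u₀ θ₀ w v

lemma sM_eq (u₀ θ₀ : ℝ) (hθ₀ : 0 < θ₀) :
    staticMaxwellian u₀ θ₀ = ProbabilityTheory.gaussianPDFReal u₀ θ₀.toNNReal := by
  funext v
  simp [staticMaxwellian, ProbabilityTheory.gaussianPDFReal,
    Real.coe_toNNReal _ hθ₀.le]

lemma sM_pos (u₀ θ₀ : ℝ) (hθ₀ : 0 < θ₀) (v : ℝ) : 0 < staticMaxwellian u₀ θ₀ v := by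
  rw [sM_eq u₀ θ₀ hθ₀]
  exact ProbabilityTheory.gaussianPDFReal_pos _ _ _ (by simp [hθ₀])

lemma sM_integrable (u₀ θ₀ : ℝ) (hθ₀ : 0 < θ₀) : Integrable (staticMaxwellian u₀ θ₀) := by
  rw [sM_eq u₀ θ₀ hθ₀]; exact ProbabilityTheory.integrable_gaussianPDFReal _ _

lemma sM_integral (u₀ θ₀ : ℝ) (hθ₀ : 0 < θ₀) : ∫ v : ℝ, staticMaxwellian u₀ θ₀ v = 1 := by
  rw [sM_eq u₀ θ₀ hθ₀]
  exact ProbabilityTheory.integral_gaussianPDFReal_eq_one u₀ (by simp [hθ₀])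

lemma sM_measurable (u₀ θ₀ : ℝ) : Measurable (staticMaxwellian u₀ θ₀) := by
  unfold staticMaxwellian; fun_prop

lemma skew_inner {N : ℕ} (A : Matrix (Fin N) (Fin N) ℝ) (hA : A.transpose = -A)
    (x : EuclideanSpace ℝ (Fin N)) : ⟪Matrix.toEuclideanLin A x, x⟫ = 0 := by
  have h : ∀ i j, A j i = -A i j := fun i j => by
    have := congrFun (congrFun hA i) j
    simpa [Matrix.transpose_apply, Matrix.neg_apply] using this
  have key : ⟪Matrix.toEuclideanLin A x, x⟫
      = ∑ i, ∑ j, A i j * x j * x i := by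
    simp only [PiLp.inner_apply, Matrix.toEuclideanLin_apply, Matrix.mulVec, dotProduct,
      RCLike.inner_apply, conj_trivial]
    apply Finset.sum_congr rfl; intro i _
    rw [Finset.mul_sum]; apply Finset.sum_congr rfl; intro j _; ring
  rw [key]
  have : (∑ i, ∑ j, A i j * x j * x i) = -∑ i, ∑ j, A i j * x j * x i := by
    calc (∑ i, ∑ j, A i j * x j * x i)
        = ∑ j, ∑ i, A i j * x j * x i := Finset.sum_comm
      _ = ∑ j, ∑ i, -(A j i * x i * x j) := by
          apply Finset.sum_congr rfl; intro j _; apply Finset.sum_congr rfl; intro i _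
          rw [h j i]; ring
      _ = -∑ i, ∑ j, A i j * x j * x i := by
          simp [Finset.sum_neg_distrib]
  linarith

lemma int_sq_div (u₀ θ₀ : ℝ) (hθ₀ : 0 < θ₀) {N : ℕ}
    {f g : ℝ → EuclideanSpace ℝ (Fin N)} (hf : Integrable f) (hg : Integrable g)
    (hnf : Integrable fun v => ‖f v‖ ^ 2 / staticMaxwellian u₀ θ₀ v)
    (hng : Integrable fun v => ‖g v‖ ^ 2 / staticMaxwellian u₀ θ₀ v) :
    Integrable fun v => ‖f v - g v‖ ^ 2 / staticMaxwellian u₀ θ₀ v := by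
  have hm : AEStronglyMeasurable
      (fun v => ‖f v - g v‖ ^ 2 / staticMaxwellian u₀ θ₀ v) volume := by
    exact ((((hf.sub hg).aemeasurable.norm).pow_const 2).div
      (sM_measurable u₀ θ₀).aemeasurable).aestronglyMeasurable
  refine ((hnf.const_mul 2).add (hng.const_mul 2)).mono' hm ?_
  filter_upwards with v
  have hMv := sM_pos u₀ θ₀ hθ₀ v
  rw [Real.norm_eq_abs, abs_of_nonneg (div_nonneg (sq_nonneg _) hMv.le)]
  have h1 : ‖f v - g v‖ ^ 2 ≤ 2 * ‖f v‖ ^ 2 + 2 * ‖g v‖ ^ 2 := by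
    have h0 : ‖f v - g v‖ ^ 2 ≤ (‖f v‖ + ‖g v‖) ^ 2 :=
      pow_le_pow_left₀ (norm_nonneg _) (norm_sub_le _ _) 2
    nlinarith [sq_nonneg (‖f v‖ - ‖g v‖)]
  have h2 := (div_le_div_iff_of_pos_right hMv).mpr h1
  rw [add_div, mul_div_assoc, mul_div_assoc] at h2
  exact h2

lemma MNorm_macro (u₀ θ₀ : ℝ) (hθ₀ : 0 < θ₀) {N : ℕ}
    (w : ℝ → EuclideanSpace ℝ (Fin N)) :
    MNorm u₀ θ₀ (macroProj u₀ θ₀ w) = ‖density w‖ := by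
  unfold MNorm macroProj
  have hpt : ∀ v, ‖staticMaxwellian u₀ θ₀ v • density w‖ ^ 2 / staticMaxwellian u₀ θ₀ v
      = staticMaxwellian u₀ θ₀ v * ‖density w‖ ^ 2 := by
    intro v
    have hMv := sM_pos u₀ θ₀ hθ₀ v
    rw [norm_smul, Real.norm_eq_abs, abs_of_pos hMv, mul_pow]
    field_simp
  simp_rw [hpt]
  rw [integral_mul_const, sM_integral u₀ θ₀ hθ₀, one_mul]
  exact Real.sqrt_sq (norm_nonneg _)

lemma micro_sq (u₀ θ₀ : ℝ) (hθ₀ : 0 < θ₀) {N : ℕ}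
    {w : ℝ → EuclideanSpace ℝ (Fin N)} (hw : Integrable w)
    (hw2 : Integrable fun v => ‖w v‖ ^ 2 / staticMaxwellian u₀ θ₀ v) :
    ∫ v : ℝ, ‖microProj u₀ θ₀ w v‖ ^ 2 / staticMaxwellian u₀ θ₀ v
      = (∫ v : ℝ, ‖w v‖ ^ 2 / staticMaxwellian u₀ θ₀ v) - ‖density w‖ ^ 2 := by
  have hpt : ∀ v, ‖microProj u₀ θ₀ w v‖ ^ 2 / staticMaxwellian u₀ θ₀ v
      = ‖w v‖ ^ 2 / staticMaxwellian u₀ θ₀ v - 2 * ⟪density w, w v⟫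
        + staticMaxwellian u₀ θ₀ v * ‖density w‖ ^ 2 := by
    intro v
    have hMv := sM_pos u₀ θ₀ hθ₀ v
    show ‖w v - staticMaxwellian u₀ θ₀ v • density w‖ ^ 2 / staticMaxwellian u₀ θ₀ v = _
    rw [norm_sub_sq_real, real_inner_smul_right, norm_smul, Real.norm_eq_abs,
      abs_of_pos hMv, mul_pow, real_inner_comm]
    field_simp
  simp_rw [hpt]
  have hinner : Integrable fun v => 2 * ⟪density w, w v⟫ :=
    (hw.const_inner (density w)).const_mul 2
  have hMn : Integrable fun v => staticMaxwellian u₀ θ₀ v * ‖density w‖ ^ 2 :=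
    (sM_integrable u₀ θ₀ hθ₀).mul_const _
  have hsub : Integrable fun v =>
      ‖w v‖ ^ 2 / staticMaxwellian u₀ θ₀ v - 2 * ⟪density w, w v⟫ := hw2.sub hinner
  rw [integral_add hsub hMn, integral_sub hw2 hinner,
    integral_const_mul, integral_inner hw, integral_mul_const,
    sM_integral u₀ θ₀ hθ₀]
  have : ⟪density w, ∫ v : ℝ, w v⟫ = ‖density w‖ ^ 2 := by
    rw [show (∫ v : ℝ, w v) = density w from rfl]
    exact real_inner_self_eq_norm_sq _
  rw [this]
  ring

/-- **Proposition 4.1** (source-iteration error estimate for the linear BGK model). -/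
theorem source_iteration_error
    {N : ℕ} (hN : 1 ≤ N) (u₀ θ₀ : ℝ) (hθ₀ : 0 < θ₀)
    (A : Matrix (Fin N) (Fin N) ℝ) (hA : A.transpose = -A)
    (ν Δt : ℝ) (hν : 0 < ν) (hΔt : 0 < Δt)
    (fk fl fl1 fk1 : ℝ → EuclideanSpace ℝ (Fin N))
    (hfk : Integrable fk) (hfl : Integrable fl)
    (hfl1 : Integrable fl1) (hfk1 : Integrable fk1)
    (hnfk : Integrable fun v => ‖fk v‖ ^ 2 / staticMaxwellian u₀ θ₀ v)
    (hnfl : Integrable fun v => ‖fl v‖ ^ 2 / staticMaxwellian u₀ θ₀ v)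
    (hnfl1 : Integrable fun v => ‖fl1 v‖ ^ 2 / staticMaxwellian u₀ θ₀ v)
    (hnfk1 : Integrable fun v => ‖fk1 v‖ ^ 2 / staticMaxwellian u₀ θ₀ v)
    (hSI : ∀ᵐ v : ℝ, fl1 v + (Δt * v) • Matrix.toEuclideanLin A (fl1 v)
        + (ν * Δt) • fl1 v
        = fk v + (ν * Δt) • (staticMaxwellian u₀ θ₀ v • density fl))
    (hBE : ∀ᵐ v : ℝ, fk1 v + (Δt * v) • Matrix.toEuclideanLin A (fk1 v)
        + (ν * Δt) • fk1 v
        = fk v + (ν * Δt) • (staticMaxwellian u₀ θ₀ v • density fk1)) :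
    (1 + ν * Δt) *
        ((MNorm u₀ θ₀ (macroProj u₀ θ₀ fun v => fl1 v - fk1 v)) ^ 2
          + (MNorm u₀ θ₀ (microProj u₀ θ₀ fun v => fl1 v - fk1 v)) ^ 2)
      ≤ ν * Δt * MNorm u₀ θ₀ (macroProj u₀ θ₀ fun v => fl v - fk1 v)
          * MNorm u₀ θ₀ (macroProj u₀ θ₀ fun v => fl1 v - fk1 v)
    ∧ MNorm u₀ θ₀ (macroProj u₀ θ₀ fun v => fl1 v - fk1 v)
      ≤ (ν * Δt / (1 + ν * Δt)) * MNorm u₀ θ₀ (macroProj u₀ θ₀ fun v => fl v - fk1 v) := by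
  have hMpos := sM_pos u₀ θ₀ hθ₀
  have hνΔ : 0 < ν * Δt := mul_pos hν hΔt
  have h1νΔ : (0:ℝ) < 1 + ν * Δt := by linarith
  have heInt : Integrable (fun v => fl1 v - fk1 v) := hfl1.sub hfk1
  have hgInt : Integrable (fun v => fl v - fk1 v) := hfl.sub hfk1
  have he2 : Integrable (fun v => ‖fl1 v - fk1 v‖ ^ 2 / staticMaxwellian u₀ θ₀ v) :=
    int_sq_div u₀ θ₀ hθ₀ hfl1 hfk1 hnfl1 hnfk1
  have hDg : density (fun v => fl v - fk1 v) = density fl - density fk1 := by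
    simpa [density] using integral_sub hfl hfk1
  -- key a.e. scalar identity
  have hae : ∀ᵐ v : ℝ, (1 + ν * Δt) * (‖fl1 v - fk1 v‖ ^ 2 / staticMaxwellian u₀ θ₀ v)
      = (ν * Δt) * ⟪density (fun v => fl v - fk1 v), fl1 v - fk1 v⟫ := by
    filter_upwards [hSI, hBE] with v h1 h2
    have h1' := congrArg (fun z : EuclideanSpace ℝ (Fin N) => ⟪z, fl1 v - fk1 v⟫) h1
    have h2' := congrArg (fun z : EuclideanSpace ℝ (Fin N) => ⟪z, fl1 v - fk1 v⟫) h2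
    simp only [inner_add_left, real_inner_smul_left] at h1' h2'
    have hLskew : ⟪Matrix.toEuclideanLin A (fl1 v), fl1 v - fk1 v⟫
        - ⟪Matrix.toEuclideanLin A (fk1 v), fl1 v - fk1 v⟫ = 0 := by
      rw [← inner_sub_left, ← map_sub]
      exact skew_inner A hA _
    have hself : ⟪fl1 v, fl1 v - fk1 v⟫ - ⟪fk1 v, fl1 v - fk1 v⟫
        = ‖fl1 v - fk1 v‖ ^ 2 := by
      rw [← inner_sub_left]; exact real_inner_self_eq_norm_sq _
    have hng' : ⟪density fl, fl1 v - fk1 v⟫ - ⟪density fk1, fl1 v - fk1 v⟫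
        = ⟪density (fun v => fl v - fk1 v), fl1 v - fk1 v⟫ := by
      rw [← inner_sub_left, ← hDg]
    have hMv := hMpos v
    have hkey : (1 + ν * Δt) * ‖fl1 v - fk1 v‖ ^ 2
        = (ν * Δt) * (staticMaxwellian u₀ θ₀ v
            * ⟪density (fun v => fl v - fk1 v), fl1 v - fk1 v⟫) := by
      linear_combination h1' - h2' - (Δt * v) * hLskew - (1 + ν * Δt) * hself
        + (ν * Δt * staticMaxwellian u₀ θ₀ v) * hng'
    rw [← mul_div_assoc, hkey,
      mul_comm (staticMaxwellian u₀ θ₀ v)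
        (inner ℝ (density fun v => fl v - fk1 v) (fl1 v - fk1 v) : ℝ),
      ← mul_assoc, mul_div_assoc, div_self hMv.ne', mul_one]
  -- integrated identity
  have hInner : Integrable (fun v => ⟪density (fun v => fl v - fk1 v), fl1 v - fk1 v⟫) :=
    heInt.const_inner _
  have hIdent : (1 + ν * Δt) * (∫ v : ℝ, ‖fl1 v - fk1 v‖ ^ 2 / staticMaxwellian u₀ θ₀ v)
      = (ν * Δt) * ⟪density (fun v => fl v - fk1 v), density (fun v => fl1 v - fk1 v)⟫ := by
    have h := integral_congr_ae hae
    rw [integral_const_mul, integral_const_mul, integral_inner heInt] at h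
    exact h
  -- norms of projections
  have hMacroE : MNorm u₀ θ₀ (macroProj u₀ θ₀ fun v => fl1 v - fk1 v)
      = ‖density (fun v => fl1 v - fk1 v)‖ := MNorm_macro u₀ θ₀ hθ₀ _
  have hMacroG : MNorm u₀ θ₀ (macroProj u₀ θ₀ fun v => fl v - fk1 v)
      = ‖density (fun v => fl v - fk1 v)‖ := MNorm_macro u₀ θ₀ hθ₀ _
  have hMicroSq : (MNorm u₀ θ₀ (microProj u₀ θ₀ fun v => fl1 v - fk1 v)) ^ 2
      = (∫ v : ℝ, ‖fl1 v - fk1 v‖ ^ 2 / staticMaxwellian u₀ θ₀ v)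
        - ‖density (fun v => fl1 v - fk1 v)‖ ^ 2 := by
    have h0 : 0 ≤ ∫ v : ℝ,
        ‖microProj u₀ θ₀ (fun v => fl1 v - fk1 v) v‖ ^ 2 / staticMaxwellian u₀ θ₀ v :=
      integral_nonneg fun v => div_nonneg (sq_nonneg _) (hMpos v).le
    rw [MNorm, Real.sq_sqrt h0, micro_sq u₀ θ₀ hθ₀ heInt he2]
  have hsqle : ‖density (fun v => fl1 v - fk1 v)‖ ^ 2
      ≤ ∫ v : ℝ, ‖fl1 v - fk1 v‖ ^ 2 / staticMaxwellian u₀ θ₀ v := by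
    nlinarith [sq_nonneg (MNorm u₀ θ₀ (microProj u₀ θ₀ fun v => fl1 v - fk1 v)), hMicroSq]
  have hCS : ⟪density (fun v => fl v - fk1 v), density (fun v => fl1 v - fk1 v)⟫
      ≤ ‖density (fun v => fl v - fk1 v)‖ * ‖density (fun v => fl1 v - fk1 v)‖ :=
    real_inner_le_norm _ _
  constructor
  · rw [hMacroE, hMacroG, hMicroSq]
    have hsum : ‖density (fun v => fl1 v - fk1 v)‖ ^ 2
        + ((∫ v : ℝ, ‖fl1 v - fk1 v‖ ^ 2 / staticMaxwellian u₀ θ₀ v)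
          - ‖density (fun v => fl1 v - fk1 v)‖ ^ 2)
        = ∫ v : ℝ, ‖fl1 v - fk1 v‖ ^ 2 / staticMaxwellian u₀ θ₀ v := by ring
    rw [hsum, hIdent]
    nlinarith [mul_le_mul_of_nonneg_left hCS hνΔ.le]
  · rw [hMacroE, hMacroG]
    rcases eq_or_lt_of_le (norm_nonneg (density (fun v => fl1 v - fk1 v))) with h0 | h0
    · rw [← h0]
      positivity
    · have hle : (1 + ν * Δt) * ‖density (fun v => fl1 v - fk1 v)‖ ^ 2
          ≤ ν * Δt * (‖density (fun v => fl v - fk1 v)‖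
              * ‖density (fun v => fl1 v - fk1 v)‖) := by
        calc (1 + ν * Δt) * ‖density (fun v => fl1 v - fk1 v)‖ ^ 2
            ≤ (1 + ν * Δt) * ∫ v : ℝ, ‖fl1 v - fk1 v‖ ^ 2 / staticMaxwellian u₀ θ₀ v :=
              mul_le_mul_of_nonneg_left hsqle h1νΔ.le
          _ = _ := hIdent
          _ ≤ _ := mul_le_mul_of_nonneg_left hCS hνΔ.le
      rw [div_mul_eq_mul_div, le_div_iff₀ h1νΔ]
      nlinarith [hle, h0]
end

section
/- Fix ν, Δt > 0. Let n^k ∈ ℝᴺ and let g^k : ℝ → ℝᴺ be componentwise integrable with n_{g^k} = 0, and set f^k := 𝓜·n^k + g^k. Suppose n* ∈ ℝᴺ and a componentwise integrable g* : ℝ → ℝᴺ with v ↦ v·g*(v) componentwise integrable satisfy the MM-L fixed-point equations: n* + u₀·Δt·A n* = n_{f^k} − Δt·A·∫_ℝ v·g*(v) dv, and, for almost every v, g*(v) + Δt·v·A g*(v) + ν·Δt·g*(v) = 𝓜(v)·n^k + g^k(v) − 𝓜(v)·n* − Δt·v·𝓜(v)·(A n*). Then n_{g*} = 0, and f* :=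 𝓜·n* + g* satisfies the backward-Euler equation f*(v) + Δt·v·A f*(v) + ν·Δt·f*(v) = f^k(v) + ν·Δt·𝓜(v)·n_{f*} for almost every v. (Claim stated after equation (4.15) of the paper: fixed points of the MM-L iteration for the linear BGK model have a moment-free micro part and solve the backward-Euler discretization.) -/
open MeasureTheory

lemma integrable_shift_iff (f : ℝ → ℝ) (a : ℝ) :
    Integrable (fun x => f (x + a)) ↔ Integrable f :=
  (MeasureTheory.measurePreserving_add_right (volume : Measure ℝ) a).integrable_comp_emb
    (MeasurableEquiv.addRight a).measurableEmbedding (g := f)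

lemma integral_mul_exp_neg_mul_sq_eq_zero (b : ℝ) :
    (∫ x : ℝ, x * Real.exp (-b * x ^ 2)) = 0 := by
  have h := integral_neg_eq_self (fun x : ℝ => x * Real.exp (-b * x ^ 2)) (volume : Measure ℝ)
  simp only [neg_sq, neg_mul] at h
  rw [integral_neg] at h
  simp only [neg_mul]
  linarith

lemma staticMaxwellian_shift {u₀ θ₀ : ℝ} (hθ₀ : 0 < θ₀) (x : ℝ) :
    staticMaxwellian u₀ θ₀ (x + u₀)
      = (Real.sqrt (2 * Real.pi * θ₀))⁻¹ * Real.exp (-(2 * θ₀)⁻¹ * x ^ 2) := by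
  unfold staticMaxwellian
  have h2 : -(x + u₀ - u₀) ^ 2 / (2 * θ₀) = -(2 * θ₀)⁻¹ * x ^ 2 := by
    have : (2:ℝ) * θ₀ ≠ 0 := by positivity
    field_simp
    ring
  rw [h2]

lemma integrable_staticMaxwellian {u₀ θ₀ : ℝ} (hθ₀ : 0 < θ₀) :
    Integrable (staticMaxwellian u₀ θ₀) := by
  have : staticMaxwellian u₀ θ₀ = ProbabilityTheory.gaussianPDFReal u₀ ⟨θ₀, hθ₀.le⟩ := rfl
  rw [this]
  exact ProbabilityTheory.integrable_gaussianPDFReal u₀ _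

lemma integral_staticMaxwellian {u₀ θ₀ : ℝ} (hθ₀ : 0 < θ₀) :
    (∫ v : ℝ, staticMaxwellian u₀ θ₀ v) = 1 := by
  have h : staticMaxwellian u₀ θ₀ = ProbabilityTheory.gaussianPDFReal u₀ ⟨θ₀, hθ₀.le⟩ := rfl
  rw [show (fun v : ℝ => staticMaxwellian u₀ θ₀ v) = staticMaxwellian u₀ θ₀ from rfl, h]
  exact ProbabilityTheory.integral_gaussianPDFReal_eq_one u₀ (by intro h; exact hθ₀.ne' (congrArg NNReal.toReal h))

lemma integrable_id_mul_staticMaxwellian {u₀ θ₀ : ℝ} (hθ₀ : 0 < θ₀) :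
    Integrable (fun v => v * staticMaxwellian u₀ θ₀ v) := by
  set C := (Real.sqrt (2 * Real.pi * θ₀))⁻¹ with hC
  have hb : (0:ℝ) < (2 * θ₀)⁻¹ := by positivity
  rw [← integrable_shift_iff _ u₀]
  have heq : (fun x : ℝ => (x + u₀) * staticMaxwellian u₀ θ₀ (x + u₀))
      = fun x : ℝ => C * (x * Real.exp (-(2 * θ₀)⁻¹ * x ^ 2))
        + (u₀ * C) * Real.exp (-(2 * θ₀)⁻¹ * x ^ 2) := by
    funext x
    rw [staticMaxwellian_shift hθ₀]
    ring
  rw [heq]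
  exact ((integrable_mul_exp_neg_mul_sq hb).const_mul C).add
    ((integrable_exp_neg_mul_sq hb).const_mul (u₀ * C))

lemma integral_id_mul_staticMaxwellian {u₀ θ₀ : ℝ} (hθ₀ : 0 < θ₀) :
    (∫ v : ℝ, v * staticMaxwellian u₀ θ₀ v) = u₀ := by
  set C := (Real.sqrt (2 * Real.pi * θ₀))⁻¹ with hC
  have hb : (0:ℝ) < (2 * θ₀)⁻¹ := by positivity
  rw [← integral_add_right_eq_self (fun v => v * staticMaxwellian u₀ θ₀ v) u₀]
  have heq : (fun x : ℝ => (x + u₀) * staticMaxwellian u₀ θ₀ (x + u₀))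
      = fun x : ℝ => C * (x * Real.exp (-(2 * θ₀)⁻¹ * x ^ 2))
        + u₀ * staticMaxwellian u₀ θ₀ (x + u₀) := by
    funext x
    rw [staticMaxwellian_shift hθ₀]
    ring
  rw [heq, integral_add (((integrable_mul_exp_neg_mul_sq hb).const_mul C))
      ((((integrable_shift_iff _ u₀).mpr (integrable_staticMaxwellian hθ₀))).const_mul u₀),
    integral_const_mul, integral_const_mul, integral_mul_exp_neg_mul_sq_eq_zero,
    integral_add_right_eq_self (staticMaxwellian u₀ θ₀) u₀, integral_staticMaxwellian hθ₀]
  ring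

/-- **Fixed points of the MM-L iteration** (claim after equation (4.15) of the paper) for
the linear BGK model: they have a moment-free micro part and solve the backward-Euler
discretization. -/
theorem mm_l_fixed_point
    {N : ℕ} (hN : 1 ≤ N) (u₀ θ₀ : ℝ) (hθ₀ : 0 < θ₀)
    (A : Matrix (Fin N) (Fin N) ℝ) (hA : A.transpose = -A)
    (ν Δt : ℝ) (hν : 0 < ν) (hΔt : 0 < Δt)
    (nk : Fin N → ℝ) (gk : ℝ → Fin N → ℝ) (hgk : Integrable gk)
    (hgk0 : (∫ v : ℝ, gk v) = 0)
    (nstar : Fin N → ℝ) (gstar : ℝ → Fin N → ℝ)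
    (hgstar : Integrable gstar) (hvg : Integrable fun v => v • gstar v)
    (hlow : nstar + (u₀ * Δt) • A.mulVec nstar
        = (∫ v : ℝ, (staticMaxwellian u₀ θ₀ v • nk + gk v))
          - Δt • A.mulVec (∫ v : ℝ, v • gstar v))
    (hhigh : ∀ᵐ v : ℝ, gstar v + (Δt * v) • A.mulVec (gstar v) + (ν * Δt) • gstar v
        = staticMaxwellian u₀ θ₀ v • nk + gk v - staticMaxwellian u₀ θ₀ v • nstar
          - (Δt * v * staticMaxwellian u₀ θ₀ v) • A.mulVec nstar) :
    (∫ v : ℝ, gstar v) = 0 ∧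
      ∀ᵐ v : ℝ, (staticMaxwellian u₀ θ₀ v • nstar + gstar v)
          + (Δt * v) • A.mulVec (staticMaxwellian u₀ θ₀ v • nstar + gstar v)
          + (ν * Δt) • (staticMaxwellian u₀ θ₀ v • nstar + gstar v)
        = (staticMaxwellian u₀ θ₀ v • nk + gk v)
          + (ν * Δt) • (staticMaxwellian u₀ θ₀ v •
              (∫ w : ℝ, (staticMaxwellian u₀ θ₀ w • nstar + gstar w))) := by
  have hMint := integrable_staticMaxwellian (u₀ := u₀) hθ₀
  have hM1 := integral_staticMaxwellian (u₀ := u₀) hθ₀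
  have hvMint := integrable_id_mul_staticMaxwellian (u₀ := u₀) hθ₀
  have hvMu := integral_id_mul_staticMaxwellian (u₀ := u₀) hθ₀
  set L := LinearMap.toContinuousLinearMap (Matrix.mulVecLin A) with hL
  have hLapp : ∀ x : Fin N → ℝ, L x = A.mulVec x := fun x => Matrix.mulVecLin_apply A x
  have hMnk : Integrable fun v : ℝ => staticMaxwellian u₀ θ₀ v • nk := hMint.smul_const nk
  have hMns : Integrable fun v : ℝ => staticMaxwellian u₀ θ₀ v • nstar := hMint.smul_const nstar
  have hLvg : Integrable fun v : ℝ => L (v • gstar v) := L.integrable_comp hvg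
  have hI2 : Integrable fun v : ℝ => Δt • L (v • gstar v) := hLvg.smul Δt
  have hI3 : Integrable fun v : ℝ => (ν * Δt) • gstar v := hgstar.smul (ν * Δt)
  have hf3eq : (fun v : ℝ => (Δt * v * staticMaxwellian u₀ θ₀ v) • A.mulVec nstar)
      = fun v : ℝ => Δt • ((v * staticMaxwellian u₀ θ₀ v) • A.mulVec nstar) := by
    funext v; rw [smul_smul, mul_assoc]
  have hf3int : Integrable fun v : ℝ =>
      (Δt * v * staticMaxwellian u₀ θ₀ v) • A.mulVec nstar := by
    rw [hf3eq]; exact (hvMint.smul_const (A.mulVec nstar)).smul Δt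
  have hf3 : (∫ v : ℝ, (Δt * v * staticMaxwellian u₀ θ₀ v) • A.mulVec nstar)
      = (Δt * u₀) • A.mulVec nstar := by
    rw [hf3eq, integral_smul, integral_smul_const, hvMu, smul_smul]
  have nf : (∫ v : ℝ, (staticMaxwellian u₀ θ₀ v • nk + gk v)) = nk := by
    rw [integral_add hMnk hgk, integral_smul_const, hM1, one_smul, hgk0, add_zero]
  have key : (∫ v : ℝ, (gstar v + Δt • L (v • gstar v) + (ν * Δt) • gstar v))
      = ∫ v : ℝ, (staticMaxwellian u₀ θ₀ v • nk + gk v - staticMaxwellian u₀ θ₀ v • nstar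
          - (Δt * v * staticMaxwellian u₀ θ₀ v) • A.mulVec nstar) := by
    apply integral_congr_ae
    filter_upwards [hhigh] with v hv
    have h4 : Δt • L (v • gstar v) = (Δt * v) • A.mulVec (gstar v) := by
      rw [L.map_smul, hLapp, smul_smul]
    rw [h4]; exact hv
  have hI12 : Integrable (fun v : ℝ => gstar v + Δt • L (v • gstar v)) := hgstar.add hI2
  have hJ1 : Integrable (fun v : ℝ => staticMaxwellian u₀ θ₀ v • nk + gk v) := hMnk.add hgk
  have hJ2 : Integrable (fun v : ℝ => staticMaxwellian u₀ θ₀ v • nk + gk v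
      - staticMaxwellian u₀ θ₀ v • nstar) := hJ1.sub hMns
  rw [integral_add hI12 hI3, integral_add hgstar hI2, integral_smul, integral_smul,
    L.integral_comp_comm hvg,
    integral_sub hJ2 hf3int, integral_sub hJ1 hMns,
    integral_add hMnk hgk, integral_smul_const, integral_smul_const, hM1, one_smul, hgk0,
    add_zero, hf3, hLapp] at key
  rw [nf] at hlow
  have h1 : (1 + ν * Δt) • (∫ v : ℝ, gstar v) = 0 := by
    linear_combination (norm := module) key - hlow
  have hm : (∫ v : ℝ, gstar v) = 0 := by
    rcases smul_eq_zero.mp h1 with h | h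
    · exact absurd h (by positivity)
    · exact h
  have hIstar : (∫ w : ℝ, (staticMaxwellian u₀ θ₀ w • nstar + gstar w)) = nstar := by
    rw [integral_add hMns hgstar, integral_smul_const, hM1, one_smul, hm, add_zero]
  refine ⟨hm, ?_⟩
  filter_upwards [hhigh] with v hv
  rw [hIstar, Matrix.mulVec_add, Matrix.mulVec_smul]
  linear_combination (norm := module) hv
end
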